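/- arXiv:2003.10660 — 3 statements merged into one kernel-verified Lean document; each statement's English description precedes it below -/
import Mathlib

section
/- Let {T_n} be the tribonacci numbers. For every integer n ≥ 3, the Toeplitz–Hessenberg determinant det(1; T_4, T_6, T_8, …, T_{2n+2}) equals 4·(−1)^{n−1}. -/
/-- The determinant of the `n × n` Toeplitz–Hessenberg matrix whose `(i,j)` entry
(0-indexed) is `a (i - j + 1)` when `j ≤ i + 1` (so `a 0` lies on the superdiagonal
and `a k` on the `k`-th subdiagonal) and `0` otherwise. -/
def THdet (a : ℕ → ℤ) (n : ℕ) : ℤ :=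
  (Matrix.of fun i j : Fin n => if (j : ℕ) ≤ (i : ℕ) + 1 then a ((i : ℕ) + 1 - (j : ℕ)) else 0).det

/-- The tribonacci numbers: `T 0 = T 1 = 0`, `T 2 = 1`,
`T n = T (n-1) + T (n-2) + T (n-3)` for `n ≥ 3`. -/
def trib : ℕ → ℤ
  | 0 => 0
  | 1 => 0
  | 2 => 1
  | n + 3 => trib (n + 2) + trib (n + 1) + trib n

def aseq : ℕ → ℤ := fun k => if k = 0 then 1 else trib (2 * k + 2)

theorem trib_rec (k : ℕ) : trib (k+6) = 3*trib (k+4) + trib (k+2) + trib k := by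
  have e0 : trib (k+3) = trib (k+2) + trib (k+1) + trib k := rfl
  have e1 : trib (k+4) = trib (k+3) + trib (k+2) + trib (k+1) := rfl
  have e2 : trib (k+5) = trib (k+4) + trib (k+3) + trib (k+2) := rfl
  have e3 : trib (k+6) = trib (k+5) + trib (k+4) + trib (k+3) := rfl
  linarith

theorem aseq_rec (k : ℕ) : aseq (k+3) = 3 * aseq (k+2) + aseq (k+1) + aseq k := by
  cases k with
  | zero => decide
  | succ k =>
    have h := trib_rec (2*k+4)
    simp only [aseq, if_neg (Nat.succ_ne_zero _), if_neg (by omega : ¬ k+1+3 = 0),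
      if_neg (by omega : ¬ k+1+2 = 0), if_neg (by omega : ¬ k+1+1 = 0)]
    have h1 : 2*(k+1+3)+2 = (2*k+4)+6 := by ring
    have h2 : 2*(k+1+2)+2 = (2*k+4)+4 := by ring
    have h3 : 2*(k+1+1)+2 = (2*k+4)+2 := by ring
    have h4 : 2*(k+1)+2 = 2*k+4 := by ring
    rw [h1, h2, h3, h4, h]

lemma det_update3 {m : ℕ} (A : Matrix (Fin m) (Fin m) ℤ) (i j1 j2 j3 : Fin m)
    (h1 : i ≠ j1) (h2 : i ≠ j2) (h3 : i ≠ j3) (c1 c2 c3 : ℤ) :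
    (A.updateRow i (A i + c1 • A j1 + c2 • A j2 + c3 • A j3)).det = A.det := by
  have s1 := Matrix.det_updateRow_add_smul_self A h1 c1
  set B := A.updateRow i (A i + c1 • A j1) with hB
  have s2 := Matrix.det_updateRow_add_smul_self B h2 c2
  have hC : B.updateRow i (B i + c2 • B j2)
      = A.updateRow i (A i + c1 • A j1 + c2 • A j2) := by
    ext x y
    by_cases hx : x = i <;>
      simp [hB, Matrix.updateRow_apply, hx, Matrix.updateRow_ne (Ne.symm h2)]
  rw [hC] at s2
  set C := A.updateRow i (A i + c1 • A j1 + c2 • A j2) with hCC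
  have s3 := Matrix.det_updateRow_add_smul_self C h3 c3
  have hD : C.updateRow i (C i + c3 • C j3)
      = A.updateRow i (A i + c1 • A j1 + c2 • A j2 + c3 • A j3) := by
    ext x y
    by_cases hx : x = i <;>
      simp [hCC, Matrix.updateRow_apply, hx, Matrix.updateRow_ne (Ne.symm h3)]
  rw [hD] at s3
  rw [s3, s2, s1]

set_option maxHeartbeats 1000000 in
theorem key (n : ℕ) (hn : 3 ≤ n) : THdet aseq (n+1) = - THdet aseq n := by
  set M : Matrix (Fin (n+1)) (Fin (n+1)) ℤ :=
    Matrix.of (fun i j : Fin (n+1) =>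
      if (j : ℕ) ≤ (i : ℕ) + 1 then aseq ((i : ℕ) + 1 - (j : ℕ)) else 0) with hM
  have hTH : THdet aseq (n+1) = M.det := by simp only [THdet, hM]
  set i : Fin (n+1) := Fin.last n with hi
  set j1 : Fin (n+1) := ⟨n-1, by omega⟩ with hj1
  set j2 : Fin (n+1) := ⟨n-2, by omega⟩ with hj2
  set j3 : Fin (n+1) := ⟨n-3, by omega⟩ with hj3
  have h1 : i ≠ j1 := by simp only [hi, hj1, Fin.ne_iff_vne, Fin.val_last]; omega
  have h2 : i ≠ j2 := by simp only [hi, hj2, Fin.ne_iff_vne, Fin.val_last]; omega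
  have h3 : i ≠ j3 := by simp only [hi, hj3, Fin.ne_iff_vne, Fin.val_last]; omega
  have hrow : M i + (-3:ℤ) • M j1 + (-1:ℤ) • M j2 + (-1:ℤ) • M j3
      = fun j : Fin (n+1) => if (j:ℕ) = n then (-1:ℤ) else 0 := by
    funext j
    have hj : (j:ℕ) ≤ n := Nat.lt_succ_iff.mp j.isLt
    have t0 : M i j = aseq (n + 1 - (j:ℕ)) := by
      simp only [hM, Matrix.of_apply, hi, Fin.val_last, if_pos (show (j:ℕ) ≤ n+1 by omega)]
    have t1 : M j1 j = aseq (n - (j:ℕ)) := by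
      simp only [hM, Matrix.of_apply, hj1, if_pos (show (j:ℕ) ≤ (n-1)+1 by omega)]
      rw [show (n-1)+1 = n from by omega]
    have t2 : M j2 j = if (j:ℕ) ≤ n-1 then aseq (n-1-(j:ℕ)) else 0 := by
      simp only [hM, Matrix.of_apply, hj2]
      rw [show (n-2)+1 = n-1 from by omega]
    have t3 : M j3 j = if (j:ℕ) ≤ n-2 then aseq (n-2-(j:ℕ)) else 0 := by
      simp only [hM, Matrix.of_apply, hj3]
      rw [show (n-3)+1 = n-2 from by omega]
    simp only [Pi.add_apply, Pi.smul_apply, smul_eq_mul, t0, t1, t2, t3]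
    obtain ⟨d, hd⟩ : ∃ d, n = (j:ℕ) + d := ⟨n - j, by omega⟩
    rcases d with _ | _ | _ | d
    · rw [if_neg (by omega), if_neg (by omega), if_pos (by omega),
        show n+1-(j:ℕ) = 1 from by omega, show n-(j:ℕ) = 0 from by omega]
      decide
    · rw [if_pos (by omega), if_neg (by omega), if_neg (by omega),
        show n+1-(j:ℕ) = 2 from by omega, show n-(j:ℕ) = 1 from by omega,
        show n-1-(j:ℕ) = 0 from by omega]
      decide
    · rw [if_pos (by omega), if_pos (by omega), if_neg (by omega),
        show n+1-(j:ℕ) = 3 from by omega, show n-(j:ℕ) = 2 from by omega,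
        show n-1-(j:ℕ) = 1 from by omega, show n-2-(j:ℕ) = 0 from by omega]
      decide
    · rw [if_pos (by omega), if_pos (by omega), if_neg (by omega),
        show n+1-(j:ℕ) = d+4 from by omega, show n-(j:ℕ) = d+3 from by omega,
        show n-1-(j:ℕ) = d+2 from by omega, show n-2-(j:ℕ) = d+1 from by omega]
      have := aseq_rec (d+1)
      linarith
  set e : Fin (n+1) → ℤ := fun j : Fin (n+1) => if (j:ℕ) = n then (-1:ℤ) else 0 with he
  have step1 : (M.updateRow i e).det = M.det := by
    rw [← hrow]
    exact det_update3 M i j1 j2 j3 h1 h2 h3 (-3) (-1) (-1)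
  have hlast : ∀ j, (M.updateRow i e) i j = e j := by
    intro j; rw [Matrix.updateRow_self]
  have hsub : ((M.updateRow i e).submatrix i.succAbove i.succAbove)
      = Matrix.of (fun x y : Fin n =>
        if (y : ℕ) ≤ (x : ℕ) + 1 then aseq ((x : ℕ) + 1 - (y : ℕ)) else 0) := by
    ext x y
    have hx : Fin.castSucc x ≠ i := by
      rw [hi]; exact (Fin.castSucc_lt_last x).ne
    simp only [hi, Fin.succAbove_last, Matrix.submatrix_apply]
    rw [Matrix.updateRow_ne (by rw [← hi]; exact hx)]
    simp only [hM, Matrix.of_apply, Fin.coe_castSucc]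
  have expand : (M.updateRow i e).det = - THdet aseq n := by
    rw [show (M.updateRow i e).det
        = ∑ j : Fin (n+1), (-1) ^ ((i : ℕ) + (j : ℕ)) * (M.updateRow i e) i j
            * ((M.updateRow i e).submatrix i.succAbove j.succAbove).det from by
      rw [hi]; exact Matrix.det_succ_row _ (Fin.last n)]
    rw [Finset.sum_eq_single i]
    · rw [hlast, hsub, he]
      have hiv : (i : ℕ) = n := by rw [hi]; exact Fin.val_last n
      simp only [hiv, eq_self_iff_true, if_true]
      rw [Even.neg_one_pow ⟨n, rfl⟩]
      simp only [THdet]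
      ring
    · intro b _ hb
      rw [hlast]
      have : e b = 0 := by
        rw [he]
        exact if_neg (fun h => hb (by rw [hi]; exact Fin.ext (h.trans (Fin.val_last n).symm)))
      rw [this]; ring
    · intro h; exact absurd (Finset.mem_univ _) h
  rw [hTH, ← step1, expand]

theorem base3 : THdet aseq 3 = 4 := by
  simp only [THdet]
  rw [Matrix.det_fin_three]
  norm_num [aseq, trib]


theorem stmt_10 (n : ℕ) (hn : 3 ≤ n) :
    THdet (fun k => if k = 0 then 1 else trib (2 * k + 2)) n = 4 * (-1) ^ (n - 1) := by
  have H : THdet aseq n = 4 * (-1) ^ (n - 1) := by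
    induction n, hn using Nat.le_induction with
    | base => rw [base3]; norm_num
    | succ n hn ih =>
      rw [key n hn, ih, show n + 1 - 1 = (n - 1) + 1 from by omega, pow_succ]
      ring
  exact H
end

section
/- Let {T_n} be the tribonacci numbers. For every integer n ≥ 3, the Toeplitz–Hessenberg determinant det(1; T_5, T_7, T_9, …, T_{2n+3}) equals 4. -/
def aa : ℕ → ℤ := fun k => if k = 0 then 1 else trib (2 * k + 3)

lemma trib_add6 (m : ℕ) : trib (m + 6) = 3 * trib (m + 4) + trib (m + 2) + trib m := by
  have e6 : trib (m+6) = trib (m+5) + trib (m+4) + trib (m+3) := rfl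
  have e5 : trib (m+5) = trib (m+4) + trib (m+3) + trib (m+2) := rfl
  have e4 : trib (m+4) = trib (m+3) + trib (m+2) + trib (m+1) := rfl
  have e3 : trib (m+3) = trib (m+2) + trib (m+1) + trib m := rfl
  rw [e6, e5, e4, e3]; ring

lemma aa_eq (k : ℕ) : aa k = trib (2 * k + 3) := by
  cases k with
  | zero => decide
  | succ n => rfl

lemma aa_rec (t : ℕ) : aa (t + 3) = 3 * aa (t + 2) + aa (t + 1) + aa t := by
  rw [aa_eq, aa_eq, aa_eq, aa_eq,
    show 2*(t+3)+3 = (2*t+3)+6 by ring, show 2*(t+2)+3 = (2*t+3)+4 by ring,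
    show 2*(t+1)+3 = (2*t+3)+2 by ring]
  exact trib_add6 _

lemma THdet_step (m : ℕ) : THdet aa (m + 4) = THdet aa (m + 3) := by
  classical
  let A : Matrix (Fin (m+4)) (Fin (m+4)) ℤ :=
    Matrix.of fun i j : Fin (m+4) => if (j : ℕ) ≤ (i : ℕ) + 1 then aa ((i : ℕ) + 1 - (j : ℕ)) else 0
  have hAe : ∀ i j : Fin (m+4),
      A i j = if (j : ℕ) ≤ (i : ℕ) + 1 then aa ((i : ℕ) + 1 - (j : ℕ)) else 0 := fun _ _ => rfl
  have hTH : THdet aa (m + 4) = A.det := rfl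
  let i0 : Fin (m+4) := ⟨m+3, by omega⟩
  let i1 : Fin (m+4) := ⟨m+2, by omega⟩
  let i2 : Fin (m+4) := ⟨m+1, by omega⟩
  let i3 : Fin (m+4) := ⟨m, by omega⟩
  let r : Fin (m+4) → ℤ := fun j => if (j : ℕ) = m+3 then 1 else 0
  have hi0 : (i0 : ℕ) = m+3 := rfl
  have hi1 : (i1 : ℕ) = m+2 := rfl
  have hi2 : (i2 : ℕ) = m+1 := rfl
  have hi3 : (i3 : ℕ) = m := rfl
  have hne1 : i0 ≠ i1 := by simp [i0, i1, Fin.ext_iff]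
  have hne2 : i0 ≠ i2 := by simp [i0, i2, Fin.ext_iff]
  have hne3 : i0 ≠ i3 := by simp [i0, i3, Fin.ext_iff]
  -- the reduced last row
  have hr : ∀ j : Fin (m+4),
      A i0 j + (-3) • A i1 j + ((-1) • A i2 j + (-1) • A i3 j) = r j := by
    intro j
    have hj : (j : ℕ) < m + 4 := j.isLt
    simp only [hAe, hi0, hi1, hi2, hi3, smul_eq_mul, r]
    rcases Nat.lt_or_ge (j : ℕ) (m+2) with h | h
    · -- (j:ℕ) ≤ m+1 : use the recurrence
      obtain ⟨t, ht⟩ : ∃ t, (j : ℕ) + t = m + 1 := ⟨m + 1 - j, by omega⟩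
      rw [if_pos (by omega), if_pos (by omega), if_pos (by omega), if_pos (by omega),
        if_neg (by omega),
        show m + 3 + 1 - (j:ℕ) = t + 3 by omega, show m + 2 + 1 - (j:ℕ) = t + 2 by omega,
        show m + 1 + 1 - (j:ℕ) = t + 1 by omega, show m + 1 - (j:ℕ) = t by omega, aa_rec]
      ring
    · rcases Nat.lt_or_ge (j : ℕ) (m+3) with h' | h'
      · -- (j:ℕ) = m+2
        rw [if_pos (by omega), if_pos (by omega), if_pos (by omega), if_neg (by omega),
          if_neg (by omega),
          show m + 3 + 1 - (j:ℕ) = 2 by omega, show m + 2 + 1 - (j:ℕ) = 1 by omega,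
          show m + 1 + 1 - (j:ℕ) = 0 by omega]
        norm_num [aa, trib]
      · -- (j:ℕ) = m+3
        rw [if_pos (by omega), if_pos (by omega), if_neg (by omega), if_neg (by omega),
          if_pos (by omega),
          show m + 3 + 1 - (j:ℕ) = 1 by omega, show m + 2 + 1 - (j:ℕ) = 0 by omega]
        norm_num [aa, trib]
  -- row reduction preserves determinant
  let A1 := A.updateRow i0 (A i0 + (-3 : ℤ) • A i1)
  let A2 := A1.updateRow i0 (A1 i0 + (-1 : ℤ) • A1 i2)
  let A3 := A2.updateRow i0 (A2 i0 + (-1 : ℤ) • A2 i3)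
  have h1 : A1.det = A.det := Matrix.det_updateRow_add_smul_self A hne1 _
  have h2 : A2.det = A1.det := Matrix.det_updateRow_add_smul_self A1 hne2 _
  have h3 : A3.det = A2.det := Matrix.det_updateRow_add_smul_self A2 hne3 _
  have hA3 : A3 = A.updateRow i0 r := by
    ext i j
    by_cases hi : i = i0
    · subst hi
      simp only [A3, A2, A1, Matrix.updateRow_self, Matrix.updateRow_ne hne2.symm,
        Matrix.updateRow_ne hne3.symm, Matrix.updateRow_ne hne2.symm, Pi.add_apply,
        Pi.smul_apply]
      rw [← hr j]; ring
    · simp only [A3, A2, A1, Matrix.updateRow_ne hi, Matrix.updateRow_ne hi]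
  -- expand the determinant along the last row
  have hlast : i0 = Fin.last (m+3) := rfl
  have hsub : (A.updateRow i0 r).submatrix Fin.castSucc Fin.castSucc =
      Matrix.of fun i j : Fin (m+3) =>
        if (j : ℕ) ≤ (i : ℕ) + 1 then aa ((i : ℕ) + 1 - (j : ℕ)) else 0 := by
    ext i j
    have hic : (Fin.castSucc i : Fin (m+4)) ≠ i0 := by
      simp [Fin.ext_iff, hi0]; omega
    simp only [Matrix.submatrix_apply, Matrix.updateRow_ne hic, hAe, Matrix.of_apply,
      Fin.coe_castSucc]
  have hexp : (A.updateRow i0 r).det = THdet aa (m + 3) := by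
    rw [Matrix.det_succ_row (A.updateRow i0 r) (Fin.last (m+3))]
    rw [Finset.sum_eq_single (Fin.last (m+3))]
    · rw [← hlast, Matrix.updateRow_self]
      have hr1 : r i0 = 1 := by simp [r, hi0]
      have hsA : i0.succAbove = Fin.castSucc := by rw [hlast]; exact Fin.succAbove_last
      rw [hr1, hsA, hsub, hi0]
      have hsign : ((-1 : ℤ)) ^ ((m+3) + (m+3)) = 1 := by
        rw [← two_mul, pow_mul]; norm_num
      rw [hsign]
      simp [THdet]
    · intro j _ hjne
      have hjv : (j : ℕ) ≠ m + 3 := fun hc => hjne (by simp [Fin.ext_iff, hc])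
      rw [← hlast, Matrix.updateRow_self]
      simp [r, hjv]
    · intro h; exact absurd (Finset.mem_univ _) h
  rw [hTH, ← h1, ← h2, ← h3, hA3, hexp]

lemma THdet_base : THdet aa 3 = 4 := by
  have : THdet aa 3 =
      (Matrix.of fun i j : Fin 3 => if (j : ℕ) ≤ (i : ℕ) + 1 then aa ((i : ℕ) + 1 - (j : ℕ)) else 0).det := rfl
  rw [this, Matrix.det_fin_three]
  norm_num [aa, trib]

theorem stmt_12 (n : ℕ) (hn : 3 ≤ n) :
    THdet (fun k => if k = 0 then 1 else trib (2 * k + 3)) n = 4 := by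
  show THdet aa n = 4
  induction n, hn using Nat.le_induction with
  | base => exact THdet_base
  | succ n hn ih =>
    obtain ⟨m, rfl⟩ : ∃ m, n = m + 3 := ⟨n - 3, by omega⟩
    rw [show m + 3 + 1 = m + 4 from rfl, THdet_step]
    exact ih
end

section
/- Fix an integer r ≥ 3 and let {T_n^{(r)}} be the generalized r-tribonacci numbers, and let {P_n^{(r)}} be the generalized r-Padovan numbers. For every integer n ≥ 1, the Toeplitz–Hessenberg determinant det(1; T_{r−1}^{(r)}, T_r^{(r)}, …, T_{n+r−2}^{(r)}) equals (−1)^{n−1} P_{n+r−1}^{(r)}. -/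
/-- Auxiliary matrix: like the Toeplitz–Hessenberg matrix but with an arbitrary
first column `b`. -/
def Hmat (a b : ℕ → ℤ) (n : ℕ) : Matrix (Fin n) (Fin n) ℤ :=
  Matrix.of fun i j => if (j : ℕ) = 0 then b i
    else if (j : ℕ) ≤ (i : ℕ) + 1 then a ((i : ℕ) + 1 - (j : ℕ)) else 0

lemma THdet_eq_Hmat (a : ℕ → ℤ) (n : ℕ) :
    THdet a n = (Hmat a (fun i => a (i + 1)) n).det := by
  unfold THdet Hmat
  congr 1
  ext i j
  by_cases h : (j : ℕ) = 0
  · simp [h]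
  · simp [h]

lemma THdet_zero (a : ℕ → ℤ) : THdet a 0 = 1 := by
  unfold THdet
  exact Matrix.det_fin_zero

lemma Hmat_det_succ (a : ℕ → ℤ) (ha : a 0 = 1) (b : ℕ → ℤ) (n : ℕ) :
    (Hmat a b (n + 2)).det =
      b 0 * (Hmat a (fun i => a (i + 1)) (n + 1)).det
        - (Hmat a (fun i => b (i + 1)) (n + 1)).det := by
  have hval : ∀ j : Fin (n+1), ((((0:Fin (n+1)).succ).succAbove j : Fin (n+2)) : ℕ)
      = if (j:ℕ) = 0 then 0 else (j:ℕ)+1 := by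
    intro j
    by_cases h : (j:ℕ) = 0
    · rw [if_pos h]
      have hlt : j.castSucc < (0:Fin (n+1)).succ := by
        simp [Fin.lt_def, h]
      rw [Fin.succAbove_of_castSucc_lt _ _ hlt]
      simp [h]
    · rw [if_neg h]
      have hle : (0:Fin (n+1)).succ ≤ j.castSucc := by
        simp [Fin.le_def]; omega
      rw [Fin.succAbove_of_le_castSucc _ _ hle]
      simp
  have m1 : (Hmat a b (n+2)).submatrix Fin.succ (((0 : Fin (n+1)).succ).succAbove)
      = Hmat a (fun i => b (i + 1)) (n + 1) := by
    ext i j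
    simp only [Matrix.submatrix_apply, Hmat, Matrix.of_apply, Fin.val_succ]
    rw [hval j]
    by_cases h : (j : ℕ) = 0
    · simp [h]
    · rw [if_neg h, if_neg (by omega : ¬ ((j:ℕ)+1) = 0), if_neg h]
      by_cases h3 : (j : ℕ) ≤ (i : ℕ) + 1
      · rw [if_pos (by omega), if_pos h3]
        congr 1
        omega
      · rw [if_neg (by omega), if_neg h3]
  have m0 : (Hmat a b (n+2)).submatrix Fin.succ ((0 : Fin (n+2)).succAbove)
      = Hmat a (fun i => a (i + 1)) (n + 1) := by
    ext i j
    simp only [Fin.succAbove_zero, Matrix.submatrix_apply, Hmat, Matrix.of_apply,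
      Fin.val_succ]
    by_cases h : (j : ℕ) = 0
    · simp [h]
    · rw [if_neg (by omega : ¬ ((j:ℕ)+1) = 0), if_neg h]
      by_cases h3 : (j : ℕ) ≤ (i : ℕ) + 1
      · rw [if_pos (by omega), if_pos h3]
        congr 1
        omega
      · rw [if_neg (by omega), if_neg h3]
  rw [Matrix.det_succ_row_zero]
  rw [Fin.sum_univ_succ, Fin.sum_univ_succ]
  have hz : ∀ j : Fin n,
      (-1 : ℤ) ^ (((j.succ.succ : Fin (n+2))) : ℕ) * (Hmat a b (n+2)) 0 j.succ.succ *
        ((Hmat a b (n+2)).submatrix Fin.succ (j.succ.succ).succAbove).det = 0 := by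
    intro j
    have : (Hmat a b (n+2)) 0 j.succ.succ = 0 := by
      simp [Hmat]
    rw [this]; ring
  rw [Finset.sum_eq_zero (fun j _ => hz j)]
  have e00 : (Hmat a b (n+2)) 0 0 = b 0 := by simp [Hmat]
  have e01 : (Hmat a b (n+2)) 0 ((0 : Fin (n+1)).succ) = 1 := by
    simp [Hmat, ha]
  rw [e00, e01, m0, m1]
  simp
  ring

lemma Hmat_det_expand (a : ℕ → ℤ) (ha : a 0 = 1) :
    ∀ (n : ℕ) (b : ℕ → ℤ), (Hmat a b (n + 1)).det =
      ∑ k ∈ Finset.range (n + 1), (-1 : ℤ) ^ k * b k * THdet a (n - k) := by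
  intro n
  induction n with
  | zero =>
    intro b
    rw [show (Hmat a b 1).det = b 0 from by
      rw [Matrix.det_fin_one]; simp [Hmat]]
    simp [THdet_zero]
  | succ n ih =>
    intro b
    rw [Hmat_det_succ a ha b n, ih (fun i => b (i + 1)), ← THdet_eq_Hmat]
    rw [Finset.sum_range_succ' (fun k => (-1 : ℤ) ^ k * b k * THdet a (n + 1 - k)) (n+1)]
    simp only [pow_succ, Nat.succ_sub_succ, Nat.sub_zero, pow_zero, one_mul]
    rw [show ∑ x ∈ Finset.range (n + 1), (-1:ℤ) ^ x * -1 * b (x + 1) * THdet a (n - x)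
        = -∑ k ∈ Finset.range (n + 1), (-1:ℤ) ^ k * b (k + 1) * THdet a (n - k) from by
      rw [← Finset.sum_neg_distrib]
      exact Finset.sum_congr rfl fun k _ => by ring]
    ring

lemma THdet_expand (a : ℕ → ℤ) (ha : a 0 = 1) (n : ℕ) :
    THdet a (n + 1) =
      ∑ k ∈ Finset.range (n + 1), (-1 : ℤ) ^ k * a (k + 1) * THdet a (n - k) := by
  rw [THdet_eq_Hmat, Hmat_det_expand a ha n]

lemma convE (s : ℕ) (T P : ℕ → ℤ)
    (hT0 : ∀ k, k < s + 2 → T k = 0) (hT1 : T (s + 2) = 1)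
    (hTrec : ∀ m, T (m + s + 3) = T (m + s + 2) + T (m + s + 1) + T m)
    (hP0 : P 0 = 1) (hP1 : ∀ k, 1 ≤ k → k < s + 3 → P k = 0)
    (hPrec : ∀ m, P (m + s + 3) = P (m + s + 1) + P m) :
    ∀ m, T (m + s + 2) + T m
      = P (m + 1) + ∑ k ∈ Finset.range (m + 1), T (k + s + 2) * P (m - k) := by
  intro m
  induction m using Nat.strong_induction_on with
  | _ m ih =>
  rcases Nat.lt_or_ge m (s + 3) with hm | hm
  · -- small case : m ≤ s+2
    rw [Finset.sum_range_succ]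
    rw [Finset.sum_eq_zero (fun k hk => by
      rw [Finset.mem_range] at hk
      rw [hP1 (m - k) (by omega) (by omega), mul_zero])]
    rw [Nat.sub_self, hP0, mul_one, zero_add]
    have key : T m = P (m + 1) := by
      rcases Nat.lt_or_ge m (s + 2) with h | h
      · rw [hT0 m h, hP1 (m + 1) (by omega) (by omega)]
      · have hm2 : m = s + 2 := by omega
        subst hm2
        rw [hT1]
        have h3 := hPrec 0
        simp only [Nat.zero_add] at h3
        rw [show s + 2 + 1 = s + 3 from by omega, h3,
          hP1 (s + 1) (by omega) (by omega), hP0]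
        ring
    rw [key]; ring
  · -- big case
    obtain ⟨j, rfl⟩ : ∃ j, m = j + s + 3 := ⟨m - (s + 3), by omega⟩
    have ih1 := ih (j + s + 1) (by omega)
    have ih2 := ih j (by omega)
    have hsplit : ∑ k ∈ Finset.range (j + s + 3 + 1), T (k + s + 2) * P (j + s + 3 - k)
        = (∑ k ∈ Finset.range (j + 1), T (k + s + 2) * P (j + s + 3 - k))
          + ∑ k ∈ Finset.range (s + 3), T ((j + 1 + k) + s + 2) * P (j + s + 3 - (j + 1 + k)) := by
      rw [show j + s + 3 + 1 = (j + 1) + (s + 3) from by omega, Finset.sum_range_add]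
    have htail : ∑ k ∈ Finset.range (s + 3), T ((j + 1 + k) + s + 2) * P (j + s + 3 - (j + 1 + k))
        = T (j + s + 3 + s + 2) := by
      rw [Finset.sum_range_succ]
      rw [Finset.sum_eq_zero (fun k hk => by
        rw [Finset.mem_range] at hk
        rw [hP1 (j + s + 3 - (j + 1 + k)) (by omega) (by omega), mul_zero])]
      rw [show j + s + 3 - (j + 1 + (s + 2)) = 0 from by omega, hP0, mul_one, zero_add]
      congr 1
      omega
    have hhead : ∑ k ∈ Finset.range (j + 1), T (k + s + 2) * P (j + s + 3 - k)
        = (∑ k ∈ Finset.range (j + 1), T (k + s + 2) * P (j + s + 1 - k))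
          + ∑ k ∈ Finset.range (j + 1), T (k + s + 2) * P (j - k) := by
      rw [← Finset.sum_add_distrib]
      refine Finset.sum_congr rfl fun k hk => ?_
      rw [Finset.mem_range] at hk
      rw [show j + s + 3 - k = (j - k) + s + 3 from by omega, hPrec (j - k),
        show j - k + s + 1 = j + s + 1 - k from by omega, mul_add]
    have hext : ∑ k ∈ Finset.range (j + s + 1 + 1), T (k + s + 2) * P (j + s + 1 - k)
        = (∑ k ∈ Finset.range (j + 1), T (k + s + 2) * P (j + s + 1 - k))
          + T (j + s + 1 + s + 2) := by
      rw [show j + s + 1 + 1 = (j + 1) + (s + 1) from by omega, Finset.sum_range_add]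
      congr 1
      rw [Finset.sum_range_succ]
      rw [Finset.sum_eq_zero (fun k hk => by
        rw [Finset.mem_range] at hk
        rw [hP1 (j + s + 1 - (j + 1 + k)) (by omega) (by omega), mul_zero])]
      rw [show j + s + 1 - (j + 1 + s) = 0 from by omega, hP0, mul_one, zero_add]
      congr 1
      omega
    have hTr := hTrec j
    have hPr := hPrec (j + 1)
    rw [show j + 1 + s + 3 = j + s + 3 + 1 from by omega,
      show j + 1 + s + 1 = j + s + 2 from by omega] at hPr
    rw [hsplit, htail, hhead]
    rw [hext] at ih1
    linarith [ih1, ih2, hTr, hPr]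

lemma convC (s : ℕ) (T P : ℕ → ℤ)
    (hT0 : ∀ k, k < s + 2 → T k = 0) (hT1 : T (s + 2) = 1)
    (hTrec : ∀ m, T (m + s + 3) = T (m + s + 2) + T (m + s + 1) + T m)
    (hP0 : P 0 = 1) (hP1 : ∀ k, 1 ≤ k → k < s + 3 → P k = 0)
    (hPrec : ∀ m, P (m + s + 3) = P (m + s + 1) + P m) :
    ∀ n, T (n + s + 2) = P (n + s + 3)
      + ∑ k ∈ Finset.range n, T (k + s + 2) * P (n - k + s + 2) := by
  have hP33 : P (s + 3) = 1 := by
    have h3 := hPrec 0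
    simp only [Nat.zero_add] at h3
    rw [h3, hP1 (s + 1) (by omega) (by omega), hP0]
    ring
  intro n
  induction n using Nat.strong_induction_on with
  | _ n ih =>
  match n, ih with
  | 0, _ =>
    simp only [Finset.range_zero, Finset.sum_empty, add_zero, Nat.zero_add]
    rw [hT1, hP33]
  | 1, _ =>
    have hTr := hTrec 0
    simp only [Nat.zero_add] at hTr
    rw [show 1 + s + 2 = s + 3 from by omega, hTr, hT1, hT0 (s + 1) (by omega),
      hT0 0 (by omega)]
    rw [Finset.sum_range_one, show 1 - 0 + s + 2 = s + 3 from by omega,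
      show 0 + s + 2 = s + 2 from by omega, hT1, hP33]
    have hPr := hPrec 1
    rw [hPr, hP1 (1 + s + 1) (by omega) (by omega), hP1 1 (by omega) (by omega)]
    ring
  | (j + 2), ih =>
    have ihj := ih j (by omega)
    have hE := convE s T P hT0 hT1 hTrec hP0 hP1 hPrec (j + 1)
    have hsum1 : ∑ k ∈ Finset.range (j + 2), T (k + s + 2) * P (j + 2 - k + s + 2)
        = (∑ k ∈ Finset.range (j + 2), T (k + s + 2) * P (j + 2 - k + s))
          + ∑ k ∈ Finset.range (j + 2), T (k + s + 2) * P (j + 1 - k) := by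
      rw [← Finset.sum_add_distrib]
      refine Finset.sum_congr rfl fun k hk => ?_
      rw [Finset.mem_range] at hk
      rw [show j + 2 - k + s + 2 = (j + 1 - k) + s + 3 from by omega, hPrec (j + 1 - k),
        show j + 1 - k + s + 1 = j + 2 - k + s from by omega, mul_add]
    have hsum2 : ∑ k ∈ Finset.range (j + 2), T (k + s + 2) * P (j + 2 - k + s)
        = (∑ k ∈ Finset.range j, T (k + s + 2) * P (j - k + s + 2)) := by
      rw [Finset.sum_range_succ, Finset.sum_range_succ]
      rw [show j + 2 - (j + 1) + s = s + 1 from by omega,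
        show j + 2 - j + s = s + 2 from by omega,
        hP1 (s + 1) (by omega) (by omega), hP1 (s + 2) (by omega) (by omega)]
      rw [mul_zero, mul_zero, add_zero, add_zero]
      refine Finset.sum_congr rfl fun k hk => ?_
      rw [Finset.mem_range] at hk
      rw [show j + 2 - k + s = j - k + s + 2 from by omega]
    have hPr := hPrec (j + 2)
    rw [show j + 2 + s + 1 = j + s + 3 from by omega] at hPr
    have hTr := hTrec (j + 1)
    rw [show j + 1 + s + 3 = j + 2 + s + 2 from by omega,
      show j + 1 + s + 2 = j + s + 3 from by omega,
      show j + 1 + s + 1 = j + s + 2 from by omega] at hTr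
    rw [show j + 1 + s + 2 = j + s + 3 from by omega] at hE
    rw [hsum1, hsum2, hPr, hTr]
    linarith [ihj, hE]

theorem stmt_15 (r : ℕ) (hr : 3 ≤ r) (T : ℕ → ℤ)
    (hT0 : ∀ k, k < r - 1 → T k = 0) (hT1 : T (r - 1) = 1)
    (hTrec : ∀ n, r ≤ n → T n = T (n - 1) + T (n - 2) + T (n - r))
    (P : ℕ → ℤ) (hP0 : P 0 = 1) (hP1 : ∀ k, 1 ≤ k → k < r → P k = 0)
    (hPrec : ∀ n, r ≤ n → P n = P (n - 2) + P (n - r))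
    (n : ℕ) (hn : 1 ≤ n) :
    THdet (fun k => if k = 0 then 1 else T (k + r - 2)) n =
      (-1) ^ (n - 1) * P (n + r - 1) := by
  obtain ⟨s, rfl⟩ : ∃ s, r = s + 3 := ⟨r - 3, by omega⟩
  -- normalize the hypotheses
  have hT0' : ∀ k, k < s + 2 → T k = 0 := fun k hk => hT0 k (by omega)
  have hT1' : T (s + 2) = 1 := by
    rw [show s + 2 = s + 3 - 1 from by omega]; exact hT1
  have hTrec' : ∀ m, T (m + s + 3) = T (m + s + 2) + T (m + s + 1) + T m := by
    intro m
    have h := hTrec (m + s + 3) (by omega)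
    rw [show m + s + 3 - 1 = m + s + 2 from by omega,
      show m + s + 3 - 2 = m + s + 1 from by omega,
      show m + s + 3 - (s + 3) = m from by omega] at h
    exact h
  have hPrec' : ∀ m, P (m + s + 3) = P (m + s + 1) + P m := by
    intro m
    have h := hPrec (m + s + 3) (by omega)
    rw [show m + s + 3 - 2 = m + s + 1 from by omega,
      show m + s + 3 - (s + 3) = m from by omega] at h
    exact h
  have hC := convC s T P hT0' hT1' hTrec' hP0 hP1 hPrec'
  set a : ℕ → ℤ := fun k => if k = 0 then 1 else T (k + (s + 3) - 2) with ha
  have ha0 : a 0 = 1 := by simp [ha]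
  have ha1 : ∀ k, a (k + 1) = T (k + s + 2) := by
    intro k
    rw [ha]
    simp only []
    rw [if_neg (Nat.succ_ne_zero k), show k + 1 + (s + 3) - 2 = k + s + 2 from by omega]
  have Dfact : ∀ n, THdet a n
      = if n = 0 then 1 else (-1 : ℤ) ^ (n - 1) * P (n + s + 2) := by
    intro n
    induction n using Nat.strong_induction_on with
    | _ n ih =>
    match n, ih with
    | 0, _ => rw [if_pos rfl, THdet_zero]
    | (m + 1), ih =>
      rw [if_neg (Nat.succ_ne_zero m)]
      rw [THdet_expand a ha0 m, Finset.sum_range_succ]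
      have hmain : ∑ k ∈ Finset.range m, (-1 : ℤ) ^ k * a (k + 1) * THdet a (m - k)
          = (-1 : ℤ) ^ (m - 1) * ∑ k ∈ Finset.range m, T (k + s + 2) * P (m - k + s + 2) := by
        rw [Finset.mul_sum]
        refine Finset.sum_congr rfl fun k hk => ?_
        rw [Finset.mem_range] at hk
        rw [ha1 k, ih (m - k) (by omega), if_neg (by omega : ¬ m - k = 0)]
        rw [show (-1 : ℤ) ^ k * T (k + s + 2) * ((-1) ^ (m - k - 1) * P (m - k + s + 2))
            = ((-1 : ℤ) ^ k * (-1) ^ (m - k - 1)) * (T (k + s + 2) * P (m - k + s + 2)) from by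
          ring]
        rw [← pow_add, show k + (m - k - 1) = m - 1 from by omega]
      have hCs : ∑ k ∈ Finset.range m, T (k + s + 2) * P (m - k + s + 2)
          = T (m + s + 2) - P (m + s + 3) := by
        have := hC m
        linarith
      rw [hmain, hCs, Nat.sub_self, THdet_zero, ha1 m,
        show m + 1 - 1 = m from by omega, show m + 1 + s + 2 = m + s + 3 from by omega]
      match m with
      | 0 =>
        have h0 := hC 0
        simp only [Finset.range_zero, Finset.sum_empty, add_zero, Nat.zero_add] at h0
        simp only [Nat.zero_sub, pow_zero, Nat.zero_add]
        rw [h0]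
        ring
      | (m' + 1) =>
        rw [show m' + 1 - 1 = m' from by omega, pow_succ]
        ring
  have hD := Dfact n
  obtain ⟨m, rfl⟩ : ∃ m, n = m + 1 := ⟨n - 1, by omega⟩
  rw [if_neg (Nat.succ_ne_zero m)] at hD
  rw [hD, show m + 1 - 1 = m from by omega,
    show m + 1 + (s + 3) - 1 = m + s + 3 from by omega,
    show m + 1 + s + 2 = m + s + 3 from by omega]
end
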